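/- Let A ⊆ ℕ₀ be a finite 3-free set, S(A) the Stanley sequence generated by A, and S(A,x) its counting function. Then for every real x ≥ 0, x − S(A,x) ≤ S(A,x)(S(A,x) − 1)/2 + max A. -/

import Mathlib

/-- A set of nonnegative integers is 3-free if it contains no three-term
arithmetic progression `a < b < c` with `a + c = 2b`. -/
def ThreeFree (S : Set ℕ) : Prop :=
  ∀ a ∈ S, ∀ b ∈ S, ∀ c ∈ S, a < b → b < c → a + c ≠ 2 * b

/-- `stanleyBelow A n` is the set of elements of the Stanley sequence generated by `A`
that are smaller than `n`: at stage `n` we include `n` itself if `n ∈ A`, or if `n`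
exceeds every element of `A` and adjoining `n` to everything chosen so far stays 3-free
(the greedy rule). -/
def stanleyBelow (A : Finset ℕ) : ℕ → Set ℕ
  | 0 => ∅
  | n + 1 => stanleyBelow A n ∪
      {m | m = n ∧ (n ∈ A ∨ ((∀ a ∈ A, a < n) ∧ ThreeFree (stanleyBelow A n ∪ {n})))}

/-- The Stanley sequence `S(A)` generated by `A`, as a set of nonnegative integers. -/
def stanley (A : Finset ℕ) : Set ℕ := ⋃ n, stanleyBelow A n

/-- The counting function `S(A,x) = #{s ∈ S(A) : s ≤ x}`. -/
noncomputable def stanleyCount (A : Finset ℕ) (x : ℝ) : ℕ :=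
  Nat.card {s : ℕ | s ∈ stanley A ∧ (s : ℝ) ≤ x}

/-- `H S n = #{(s₁,s₂) : s₁,s₂ ∈ S, s₁ < s₂, n = 2s₂ - s₁}`. -/
noncomputable def H (S : Set ℕ) (n : ℕ) : ℕ :=
  Nat.card {p : ℕ × ℕ | p.1 ∈ S ∧ p.2 ∈ S ∧ p.1 < p.2 ∧ n + p.1 = 2 * p.2}

/-!
Every `n > max A` missing from `S(A)` was rejected by the greedy rule, so it closes a
progression `a < b < n` with `a, b ∈ S(A)`, i.e. `n = 2b - a`. Hence the integers in `[0, x]`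
are covered by the `S(A,x)` elements of `S(A)` up to `x`, by the at most `max A` integers below
`max A`, and by the values `2b - a` over the `S(A,x).choose 2` pairs `a < b` of those elements.
-/

open Finset

theorem ThreeFree.mono {S T : Set ℕ} (h : S ⊆ T) (hT : ThreeFree T) : ThreeFree S :=
  fun a ha b hb c hc => hT a (h ha) b (h hb) c (h hc)

theorem ThreeFree.exists_of_not_threeFree_union_singleton {S : Set ℕ} {n : ℕ} (hS : ThreeFree S)
    (hlt : ∀ s ∈ S, s < n) (h : ¬ ThreeFree (S ∪ {n})) :
    ∃ a ∈ S, ∃ b ∈ S, a < b ∧ b < n ∧ n + a = 2 * b := by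
  by_contra hne
  refine h fun a ha b hb c hc hab hbc => ?_
  simp only [Set.union_singleton, Set.mem_insert_iff] at ha hb hc
  rcases hc with rfl | hc
  · rcases ha with rfl | ha
    · omega
    rcases hb with rfl | hb
    · omega
    exact fun heq => hne ⟨a, ha, b, hb, hab, hbc, by omega⟩
  · have := hlt c hc
    rcases ha with rfl | ha
    · omega
    rcases hb with rfl | hb
    · omega
    exact hS a ha b hb c hc hab hbc

section Stanley

variable {A : Finset ℕ} {m n : ℕ}

theorem mem_stanleyBelow_succ :
    m ∈ stanleyBelow A (n + 1) ↔ m ∈ stanleyBelow A n ∨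
      (m = n ∧ (n ∈ A ∨ ((∀ a ∈ A, a < n) ∧ ThreeFree (stanleyBelow A n ∪ {n})))) :=
  Iff.rfl

theorem stanleyBelow_succ_subset : stanleyBelow A (n + 1) ⊆ stanleyBelow A n ∪ {n} :=
  fun _ hm => (mem_stanleyBelow_succ.mp hm).imp id And.left

theorem lt_of_mem_stanleyBelow (h : m ∈ stanleyBelow A n) : m < n := by
  induction n with
  | zero => exact absurd h id
  | succ n ih =>
    rcases stanleyBelow_succ_subset h with h | rfl
    · exact (ih h).trans (Nat.lt_add_one n)
    · exact Nat.lt_add_one m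

theorem mem_or_forall_lt_of_mem_stanleyBelow (h : m ∈ stanleyBelow A n) :
    m ∈ A ∨ ∀ a ∈ A, a < m := by
  induction n with
  | zero => exact absurd h id
  | succ n ih =>
    rcases mem_stanleyBelow_succ.mp h with h | ⟨rfl, hA | hgreedy⟩
    · exact ih h
    · exact Or.inl hA
    · exact Or.inr hgreedy.1

theorem stanleyBelow_subset_of_mem (hn : n ∈ A) : stanleyBelow A n ⊆ A := fun _ hm =>
  (mem_or_forall_lt_of_mem_stanleyBelow hm).resolve_right
    fun hlt => (hlt n hn).not_gt (lt_of_mem_stanleyBelow hm)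

theorem threeFree_stanleyBelow (hA3 : ThreeFree ↑A) (n : ℕ) : ThreeFree (stanleyBelow A n) := by
  induction n with
  | zero => exact fun a ha => absurd ha id
  | succ n ih =>
    by_cases hn : n ∈ A
    · refine hA3.mono (stanleyBelow_succ_subset.trans fun m hm => ?_)
      rcases hm with hm | rfl
      · exact stanleyBelow_subset_of_mem hn hm
      · exact hn
    by_cases hgreedy : (∀ a ∈ A, a < n) ∧ ThreeFree (stanleyBelow A n ∪ {n})
    · exact hgreedy.2.mono stanleyBelow_succ_subset
    · refine ih.mono fun m hm => ?_
      rcases mem_stanleyBelow_succ.mp hm with hm | ⟨-, hA | hA⟩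
      · exact hm
      · exact absurd hA hn
      · exact absurd hA hgreedy

theorem stanleyBelow_subset_stanley (n : ℕ) : stanleyBelow A n ⊆ stanley A :=
  Set.subset_iUnion (stanleyBelow A) n

theorem mem_stanley_of_mem (ha : m ∈ A) : m ∈ stanley A :=
  stanleyBelow_subset_stanley (m + 1) (mem_stanleyBelow_succ.mpr (Or.inr ⟨rfl, Or.inl ha⟩))

theorem exists_ap_of_notMem_stanley (hA3 : ThreeFree ↑A) (hn : n ∉ stanley A)
    (hlt : ∀ a ∈ A, a < n) :
    ∃ a ∈ stanley A, ∃ b ∈ stanley A, a < b ∧ b < n ∧ n + a = 2 * b := by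
  have hrejected : ¬ ThreeFree (stanleyBelow A n ∪ {n}) := fun hfree =>
    hn (stanleyBelow_subset_stanley (n + 1)
      (mem_stanleyBelow_succ.mpr (Or.inr ⟨rfl, Or.inr ⟨hlt, hfree⟩⟩)))
  obtain ⟨a, ha, b, hb, hab⟩ :=
    (threeFree_stanleyBelow hA3 n).exists_of_not_threeFree_union_singleton
      (fun _ => lt_of_mem_stanleyBelow) hrejected
  exact ⟨a, stanleyBelow_subset_stanley n ha, b, stanleyBelow_subset_stanley n hb, hab⟩

theorem stanleyCount_eq_card {x : ℝ} (hx : 0 ≤ x) {T : Finset ℕ}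
    (hT : ∀ s, s ∈ T ↔ s ∈ stanley A ∧ s ≤ ⌊x⌋₊) : stanleyCount A x = #T := by
  have hset : {s : ℕ | s ∈ stanley A ∧ (s : ℝ) ≤ x} = ↑T := by
    ext s
    simp only [Set.mem_ofPred_eq, mem_coe, hT, Nat.le_floor_iff hx]
  rw [stanleyCount, hset, Nat.card_coe_set_eq, Set.ncard_coe_finset]

end Stanley

theorem succ_le_card_add_choose_two_add {S : Set ℕ} {T : Finset ℕ} {m N : ℕ}
    (hT : ∀ s, s ∈ T ↔ s ∈ S ∧ s ≤ N) (hm : m ∈ S)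
    (hS : ∀ n, m < n → n ∉ S → ∃ a ∈ S, ∃ b ∈ S, a < b ∧ b < n ∧ n + a = 2 * b) :
    N + 1 ≤ #T + (#T).choose 2 + m := by
  classical
  set pairs := {p ∈ T ×ˢ T | p.1 < p.2}
  have hcover : range (N + 1) ⊆ T ∪ range m ∪ pairs.image fun p => 2 * p.2 - p.1 := by
    intro n hn
    have hnN : n ≤ N := Nat.lt_succ_iff.mp (mem_range.mp hn)
    simp only [mem_union, mem_range, mem_image, mem_filter, mem_product, hT, pairs]
    by_cases hnS : n ∈ S
    · exact Or.inl (Or.inl ⟨hnS, hnN⟩)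
    rcases lt_or_ge n m with hnm | hmn
    · exact Or.inl (Or.inr hnm)
    obtain ⟨a, ha, b, hb, hab, hbn, hap⟩ :=
      hS n (hmn.lt_of_ne fun h => hnS (h ▸ hm)) hnS
    exact Or.inr ⟨(a, b), ⟨⟨⟨ha, by omega⟩, hb, by omega⟩, hab⟩, by omega⟩
  calc N + 1 = #(range (N + 1)) := (card_range _).symm
    _ ≤ #(T ∪ range m ∪ pairs.image fun p => 2 * p.2 - p.1) := card_le_card hcover
    _ ≤ #T + m + #pairs := by
      grw [card_union_le, card_union_le, card_range, card_image_le]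
    _ = #T + (#T).choose 2 + m := by
      rw [card_product_filter_lt]
      ring

/-- `x - S(A,x) ≤ S(A,x)(S(A,x) - 1)/2 + max A`. -/
theorem sub_count_le (A : Finset ℕ) (hA : A.Nonempty)
    (hA3 : ThreeFree ↑A) (x : ℝ) (hx : 0 ≤ x) :
    x - (stanleyCount A x : ℝ) ≤
      (stanleyCount A x : ℝ) * ((stanleyCount A x : ℝ) - 1) / 2 + (A.max' hA : ℝ) := by
  classical
  set T := {s ∈ range (⌊x⌋₊ + 1) | s ∈ stanley A}
  have hT : ∀ s, s ∈ T ↔ s ∈ stanley A ∧ s ≤ ⌊x⌋₊ := fun s => by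
    simp only [T, mem_filter, mem_range, Nat.lt_succ_iff, and_comm]
  have hbound : ⌊x⌋₊ + 1 ≤ #T + (#T).choose 2 + A.max' hA :=
    succ_le_card_add_choose_two_add hT (mem_stanley_of_mem (A.max'_mem hA))
      fun n hn hnS =>
        exists_ap_of_notMem_stanley hA3 hnS fun a ha => (A.le_max' a ha).trans_lt hn
  have hboundR : (⌊x⌋₊ : ℝ) + 1 ≤ #T + (#T : ℝ) * (#T - 1) / 2 + A.max' hA := by
    rw [← Nat.cast_choose_two]
    exact_mod_cast hbound
  rw [stanleyCount_eq_card hx hT]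
  linarith [Nat.lt_floor_add_one x]
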